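/- For every integer n ≥ 0, Q_e(2n+1) − Q_o(2n+1) = (−1)^{n+1} · ((2n)!/n!) · ((2n+2)!/(n+1)!), as an identity of integers. -/

import Mathlib

/-- A labelled plane tree: a root carrying a natural-number label together with a finite
ordered list of labelled plane subtrees. -/
inductive LPlaneTree : Type
  | node : ℕ → List LPlaneTree → LPlaneTree

namespace LPlaneTree

/-- The number of vertices of a labelled plane tree. -/
def numVertices : LPlaneTree → ℕ
  | node _ ts => 1 + (ts.attach.map fun x => numVertices x.1).sum
decreasing_by
  have := List.sizeOf_lt_of_mem x.2
  simp only [LPlaneTree.node.sizeOf_spec]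
  omega

/-- The number of edges of a labelled plane tree: one less than the number of vertices. -/
def numEdges (t : LPlaneTree) : ℕ := t.numVertices - 1

/-- The number of leaves (vertices with no children) of a labelled plane tree. -/
def numLeaves : LPlaneTree → ℕ
  | node _ [] => 1
  | node _ (t :: ts) => ((t :: ts).attach.map fun x => numLeaves x.1).sum
decreasing_by
  have := List.sizeOf_lt_of_mem x.2
  simp only [LPlaneTree.node.sizeOf_spec]
  omega

/-- The list of all labels appearing in a labelled plane tree. -/
def labels : LPlaneTree → List ℕ
  | node a ts => a :: (ts.attach.map fun x => labels x.1).flatten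
decreasing_by
  have := List.sizeOf_lt_of_mem x.2
  simp only [LPlaneTree.node.sizeOf_spec]
  omega

/-- A labelled plane tree with `n` edges: it has `n` edges and its `n + 1` vertices are
labelled bijectively by `{1, 2, …, n+1}`. -/
def IsLabelled (n : ℕ) (t : LPlaneTree) : Prop :=
  t.numEdges = n ∧ t.labels.Perm (List.range' 1 (n + 1))

end LPlaneTree


open Finset Finset.Nat
open Finset.HasAntidiagonal.antidiagonal (fst_le snd_le)

inductive PTree : Type
  | node : List PTree → PTree

namespace PTree

mutual
def deq : (a b : PTree) → Decidable (a = b)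
  | .node ts, .node us =>
    match deqL ts us with
    | isTrue h => isTrue (by rw [h])
    | isFalse h => isFalse (by intro e; cases e; exact h rfl)
def deqL : (as bs : List PTree) → Decidable (as = bs)
  | [], [] => isTrue rfl
  | [], _ :: _ => isFalse (by simp)
  | _ :: _, [] => isFalse (by simp)
  | a :: as, b :: bs =>
    match deq a b, deqL as bs with
    | isTrue h1, isTrue h2 => isTrue (by rw [h1, h2])
    | isFalse h1, _ => isFalse (by intro e; cases e; exact h1 rfl)
    | _, isFalse h2 => isFalse (by intro e; cases e; exact h2 rfl)
end

instance : DecidableEq PTree := deq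

mutual
def psize : PTree → ℕ
  | node ts => 1 + psizeL ts
def psizeL : List PTree → ℕ
  | [] => 0
  | t :: ts => psize t + psizeL ts
end

mutual
def pleaves : PTree → ℕ
  | node [] => 1
  | node (t :: ts) => pleavesL (t :: ts)
def pleavesL : List PTree → ℕ
  | [] => 0
  | t :: ts => pleaves t + pleavesL ts
end

theorem psize_pos : ∀ t : PTree, 1 ≤ psize t
  | node ts => by rw [psize]; omega

theorem psizeL_eq_zero : ∀ {ts : List PTree}, psizeL ts = 0 → ts = []
  | [], _ => rfl
  | t :: ts, h => by
      rw [psizeL] at h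
      have := psize_pos t
      omega

/-- Attach `t` as new first child of `u`. -/
def graft (t : PTree) : PTree → PTree
  | node ts => node (t :: ts)

theorem graft_inj {t u t' u' : PTree} (h : graft t u = graft t' u') : t = t' ∧ u = u' := by
  cases u with | node ts => cases u' with | node ts' =>
  rw [graft, graft] at h
  cases h
  exact ⟨rfl, rfl⟩

@[simp] theorem psize_graft (t u : PTree) : psize (graft t u) = psize t + psize u := by
  cases u with | node ts =>
  rw [graft, psize, psize, psizeL]; ring

theorem pleaves_graft_nil (t : PTree) : pleaves (graft t (node [])) = pleaves t := by
  rw [graft, pleaves, pleavesL, pleavesL]; ring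

theorem pleaves_graft_cons (t u : PTree) (h : u ≠ node []) :
    pleaves (graft t u) = pleaves t + pleaves u := by
  cases u with | node ts =>
  cases ts with
  | nil => exact absurd rfl h
  | cons v vs => rw [graft, pleaves, pleavesL, pleaves]

/-- The finset of plane-tree shapes with `n` edges (i.e. `n+1` vertices). -/
def S : ℕ → Finset PTree
  | 0 => {node []}
  | n + 1 =>
    (antidiagonal n).attach.biUnion fun ijh =>
      ((S ijh.1.1) ×ˢ (S ijh.1.2)).image fun q => graft q.1 q.2
  decreasing_by
    · have := fst_le ijh.2; omega
    · have := snd_le ijh.2; omega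

@[simp] theorem S_zero : S 0 = {node []} := by rw [S]

theorem S_succ (n : ℕ) :
    S (n + 1) = (antidiagonal n).biUnion fun ij =>
      ((S ij.1) ×ˢ (S ij.2)).image fun q => graft q.1 q.2 := by
  rw [S]; ext t; simp

@[simp] theorem mem_S {n : ℕ} {t : PTree} : t ∈ S n ↔ psize t = n + 1 := by
  induction n using Nat.strong_induction_on generalizing t with
  | _ n ih =>
    cases n with
    | zero =>
      cases t with | node ts =>
      simp only [S_zero, mem_singleton]
      constructor
      · intro h
        injection h with h'
        subst h'
        rw [psize, psizeL]
      · intro h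
        rw [psize] at h
        have : psizeL ts = 0 := by omega
        rw [psizeL_eq_zero this]
    | succ n =>
      rw [S_succ]
      simp only [mem_biUnion, mem_image, mem_product, Prod.exists]
      constructor
      · rintro ⟨i, j, hij, u, r, ⟨hu, hr⟩, rfl⟩
        rw [Finset.HasAntidiagonal.mem_antidiagonal] at hij
        have hu' := (ih i (by omega)).mp hu
        have hr' := (ih j (by omega)).mp hr
        rw [psize_graft, hu', hr']; omega
      · intro h
        cases t with | node ts =>
        cases ts with
        | nil => rw [psize, psizeL] at h; omega
        | cons u us =>
          have hs : psize (node (u :: us)) = psize u + psize (node us) := by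
            rw [psize, psizeL, psize]; ring
          have h1 := psize_pos u
          have h2 := psize_pos (node us)
          refine ⟨psize u - 1, psize (node us) - 1, ?_, u, node us, ⟨?_, ?_⟩, rfl⟩
          · rw [Finset.HasAntidiagonal.mem_antidiagonal]; omega
          · rw [ih _ (by omega)]; omega
          · rw [ih _ (by omega)]; omega

/-- The signed count of plane-tree shapes with `n` edges, by parity of the number of leaves. -/
def b (n : ℕ) : ℤ := ∑ t ∈ S n, (-1 : ℤ) ^ pleaves t

@[simp] theorem b_zero : b 0 = -1 := by
  rw [b, S_zero]; simp [pleaves, pleavesL]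

theorem ne_node_nil_of_mem_S {j : ℕ} {r : PTree} (hj : j ≠ 0) (hr : r ∈ S j) :
    r ≠ node [] := by
  intro h
  subst h
  rw [mem_S, psize, psizeL] at hr
  omega

theorem b_succ (n : ℕ) :
    b (n + 1) = (∑ ij ∈ antidiagonal n, b ij.1 * b ij.2) + 2 * b n := by
  have hdisj : (↑(antidiagonal n) : Set (ℕ × ℕ)).PairwiseDisjoint
      (fun ij : ℕ × ℕ => ((S ij.1) ×ˢ (S ij.2)).image fun q => graft q.1 q.2) := by
    rintro ⟨i, j⟩ hij ⟨i', j'⟩ hij' hne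
    simp only [Finset.disjoint_left, mem_image, mem_product, Prod.exists]
    rintro t ⟨u, r, ⟨hu, hr⟩, rfl⟩ ⟨u', r', ⟨hu', hr'⟩, he⟩
    obtain ⟨rfl, rfl⟩ := graft_inj he.symm
    rw [mem_S] at hu hr hu' hr'
    exact hne (by simp only [Prod.mk.injEq]; omega)
  have hinner : ∀ ij ∈ antidiagonal n,
      (∑ t ∈ ((S ij.1) ×ˢ (S ij.2)).image (fun q => graft q.1 q.2), (-1 : ℤ) ^ pleaves t)
        = if ij.2 = 0 then b ij.1 else b ij.1 * b ij.2 := by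
    rintro ⟨i, j⟩ _
    rw [Finset.sum_image]
    · rcases eq_or_ne j 0 with rfl | hj
      · simp only [if_pos rfl]
        rw [Finset.sum_product, b]
        apply Finset.sum_congr rfl
        intro u _
        rw [S_zero, Finset.sum_singleton, pleaves_graft_nil]
      · rw [if_neg hj, Finset.sum_product, b, b, Finset.sum_mul_sum]
        apply Finset.sum_congr rfl
        intro u _
        apply Finset.sum_congr rfl
        intro r hr
        rw [pleaves_graft_cons u r (ne_node_nil_of_mem_S hj hr), pow_add]
    · rintro ⟨u, r⟩ _ ⟨u', r'⟩ _ he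
      obtain ⟨rfl, rfl⟩ := graft_inj he
      rfl
  rw [b, S_succ, Finset.sum_biUnion hdisj, Finset.sum_congr rfl hinner]
  have hmem : ((n, 0) : ℕ × ℕ) ∈ antidiagonal n := by rw [Finset.HasAntidiagonal.mem_antidiagonal]; ring
  rw [← Finset.sum_erase_add _ _ hmem, ← Finset.sum_erase_add _ (fun ij => b ij.1 * b ij.2) hmem]
  have : ∀ ij ∈ (antidiagonal n).erase (n, 0),
      (if ij.2 = 0 then b ij.1 else b ij.1 * b ij.2) = b ij.1 * b ij.2 := by
    rintro ⟨i, j⟩ hij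
    rw [Finset.mem_erase, Finset.HasAntidiagonal.mem_antidiagonal] at hij
    have hj : j ≠ 0 := by
      intro h
      exact hij.1 (by simp only [Prod.mk.injEq]; omega)
    rw [if_neg hj]
  rw [Finset.sum_congr rfl this]
  norm_num
  ring

theorem sum_range_two_mul (g : ℕ → ℤ) (m : ℕ) :
    ∑ i ∈ Finset.range (2 * m), g i
      = (∑ p ∈ Finset.range m, g (2 * p)) + ∑ p ∈ Finset.range m, g (2 * p + 1) := by
  induction m with
  | zero => simp
  | succ k ih =>
    have h : 2 * (k + 1) = 2 * k + 1 + 1 := by ring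
    rw [h, Finset.sum_range_succ, Finset.sum_range_succ, ih, Finset.sum_range_succ,
      Finset.sum_range_succ]
    ring

theorem b_parity (m : ℕ) :
    b (2 * m + 1) = (-1) ^ (m + 1) * catalan m ∧ b (2 * m + 2) = 0 := by
  induction m using Nat.strong_induction_on with
  | _ m ih =>
  have heven : ∀ k, k ≤ m → k ≠ 0 → b (2 * k) = 0 := by
    intro k hk hk0
    obtain ⟨j, rfl⟩ := Nat.exists_eq_succ_of_ne_zero hk0
    have h := (ih j (by omega)).2
    rw [show 2 * (j + 1) = 2 * j + 2 by ring]
    exact h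
  have hodd : ∀ k, k < m → b (2 * k + 1) = (-1) ^ (k + 1) * catalan k :=
    fun k hk => (ih k hk).1
  have h1 : b (2 * m + 1) = (-1) ^ (m + 1) * catalan m := by
    cases m with
    | zero =>
      have h0 := b_succ 0
      rw [Finset.Nat.antidiagonal_zero, Finset.sum_singleton, b_zero] at h0
      rw [show 2 * 0 + 1 = 0 + 1 by rfl, h0]
      norm_num
    | succ m' =>
      have hb : b (2 * (m' + 1)) = 0 := heven (m' + 1) le_rfl (by omega)
      have key := b_succ (2 * (m' + 1))
      rw [Finset.Nat.sum_antidiagonal_eq_sum_range_succ_mk] at key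
      have hsplit := sum_range_two_mul (fun k => b k * b (2 * (m' + 1) - k)) (m' + 1)
      rw [show (2 * (m' + 1)).succ = 2 * (m' + 1) + 1 from rfl, Finset.sum_range_succ,
        hsplit] at key
      have hevenpart : ∑ p ∈ Finset.range (m' + 1),
          b (2 * p) * b (2 * (m' + 1) - 2 * p) = 0 := by
        apply Finset.sum_eq_zero
        intro p hp
        rw [Finset.mem_range] at hp
        rcases eq_or_ne p 0 with rfl | hp0
        · rw [show 2 * (m' + 1) - 2 * 0 = 2 * (m' + 1) by omega, hb, mul_zero]
        · rw [heven p (by omega) hp0, zero_mul]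
      have hoddpart : ∑ p ∈ Finset.range (m' + 1),
          b (2 * p + 1) * b (2 * (m' + 1) - (2 * p + 1))
            = (-1) ^ (m' + 1 + 1) * catalan (m' + 1) := by
        have hcat : (catalan (m' + 1) : ℤ)
            = ∑ p ∈ Finset.range (m' + 1), (catalan p : ℤ) * catalan (m' - p) := by
          rw [catalan_succ']
          rw [Finset.Nat.sum_antidiagonal_eq_sum_range_succ_mk]
          push_cast
          rfl
        rw [hcat, Finset.mul_sum]
        apply Finset.sum_congr rfl
        intro p hp
        rw [Finset.mem_range] at hp
        have e1 : 2 * (m' + 1) - (2 * p + 1) = 2 * (m' - p) + 1 := by omega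
        rw [e1, hodd p (by omega), hodd (m' - p) (by omega)]
        have e2 : (-1 : ℤ) ^ (p + 1) * (-1) ^ (m' - p + 1) = (-1) ^ (m' + 1 + 1) := by
          rw [← pow_add]
          have : p + 1 + (m' - p + 1) = m' + 2 := by omega
          rw [this]
        -- (cast already normal)
        calc (-1 : ℤ) ^ (p + 1) * catalan p * ((-1) ^ (m' - p + 1) * catalan (m' - p))
            = ((-1 : ℤ) ^ (p + 1) * (-1) ^ (m' - p + 1)) * (catalan p * catalan (m' - p)) := by
              ring
          _ = (-1) ^ (m' + 1 + 1) * (catalan p * catalan (m' - p)) := by rw [e2]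
      rw [hevenpart, hoddpart] at key
      rw [show 2 * (m' + 1) - 2 * (m' + 1) = 0 by omega, b_zero, hb] at key
      rw [show 2 * (m' + 1) + 1 = 2 * (m' + 1) + 1 from rfl, key]
      ring
  refine ⟨h1, ?_⟩
  -- b (2m + 2) = 0
  have key := b_succ (2 * m + 1)
  rw [Finset.Nat.sum_antidiagonal_eq_sum_range_succ_mk] at key
  have hsplit := sum_range_two_mul (fun k => b k * b (2 * m + 1 - k)) (m + 1)
  rw [show (2 * m + 1).succ = 2 * (m + 1) by omega, hsplit] at key
  have hevenpart : ∑ p ∈ Finset.range (m + 1), b (2 * p) * b (2 * m + 1 - 2 * p)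
      = - b (2 * m + 1) := by
    rw [Finset.sum_eq_single_of_mem 0 (by simp)]
    · rw [show 2 * 0 = 0 by rfl, b_zero, show 2 * m + 1 - 0 = 2 * m + 1 by omega]; ring
    · intro p hp hp0
      rw [heven p (by rw [Finset.mem_range] at hp; omega) hp0, zero_mul]
  have hoddpart : ∑ p ∈ Finset.range (m + 1), b (2 * p + 1) * b (2 * m + 1 - (2 * p + 1))
      = - b (2 * m + 1) := by
    rw [Finset.sum_eq_single_of_mem m (by simp)]
    · rw [show 2 * m + 1 - (2 * m + 1) = 0 by omega, b_zero]; ring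
    · intro p hp hpm
      rw [Finset.mem_range] at hp
      have e1 : 2 * m + 1 - (2 * p + 1) = 2 * (m - p) := by omega
      rw [e1, heven (m - p) (by omega) (by omega), mul_zero]
  rw [hevenpart, hoddpart] at key
  rw [show 2 * m + 2 = 2 * m + 1 + 1 from rfl, key]
  ring

end PTree


namespace LPlaneTree

theorem numVertices_node (a : ℕ) (ts : List LPlaneTree) :
    numVertices (node a ts) = 1 + (ts.map numVertices).sum := by
  rw [numVertices]; congr 1; simp

theorem numLeaves_node_cons (a : ℕ) (t : LPlaneTree) (ts : List LPlaneTree) :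
    numLeaves (node a (t :: ts)) = ((t :: ts).map numLeaves).sum := by
  rw [numLeaves]; congr 1; simp

theorem labels_node (a : ℕ) (ts : List LPlaneTree) :
    labels (node a ts) = a :: (ts.map labels).flatten := by
  rw [labels]; congr 2; simp

/-- Concatenated label lists of a forest. -/
def labelsL (ts : List LPlaneTree) : List ℕ := (ts.map labels).flatten

theorem labels_node' (a : ℕ) (ts : List LPlaneTree) :
    labels (node a ts) = a :: labelsL ts := labels_node a ts

end LPlaneTree

open LPlaneTree in
mutual
/-- The underlying plane-tree shape of a labelled plane tree. -/
def shape : LPlaneTree → PTree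
  | .node _ ts => .node (shapeL ts)
/-- The underlying shapes of a forest. -/
def shapeL : List LPlaneTree → List PTree
  | [] => []
  | t :: ts => shape t :: shapeL ts
end

open PTree LPlaneTree

mutual
theorem psize_shape : ∀ t : LPlaneTree, psize (shape t) = numVertices t
  | .node a ts => by
    rw [shape, psize, psizeL_shapeL ts, numVertices_node]
theorem psizeL_shapeL : ∀ ts : List LPlaneTree, psizeL (shapeL ts) = (ts.map numVertices).sum
  | [] => by rw [shapeL, psizeL, List.map_nil, List.sum_nil]
  | t :: ts => by
    rw [shapeL, psizeL, psize_shape t, psizeL_shapeL ts, List.map_cons, List.sum_cons]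
end

mutual
theorem pleaves_shape : ∀ t : LPlaneTree, pleaves (shape t) = numLeaves t
  | .node a [] => by rw [shape, shapeL, pleaves, numLeaves]
  | .node a (t :: ts) => by
    rw [shape, shapeL, pleaves, ← shapeL, pleavesL_shapeL (t :: ts), numLeaves_node_cons]
theorem pleavesL_shapeL : ∀ ts : List LPlaneTree, pleavesL (shapeL ts) = (ts.map numLeaves).sum
  | [] => by rw [shapeL, pleavesL, List.map_nil, List.sum_nil]
  | t :: ts => by
    rw [shapeL, pleavesL, pleaves_shape t, pleavesL_shapeL ts, List.map_cons, List.sum_cons]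
end

mutual
/-- Rebuild a labelled plane tree from a shape and a preorder list of labels. -/
def build : PTree → List ℕ → LPlaneTree × List ℕ
  | .node ts, l =>
    (LPlaneTree.node (l.headD 0) (buildL ts l.tail).1, (buildL ts l.tail).2)
/-- Rebuild a labelled forest from shapes and a preorder list of labels. -/
def buildL : List PTree → List ℕ → List LPlaneTree × List ℕ
  | [], l => ([], l)
  | t :: ts, l => ((build t l).1 :: (buildL ts (build t l).2).1, (buildL ts (build t l).2).2)
end

mutual
theorem build_snd : ∀ (t : PTree) (l : List ℕ), (build t l).2 = l.drop (psize t)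
  | .node ts, l => by
    rw [build, buildL_snd ts l.tail, psize, ← List.drop_one, List.drop_drop]
theorem buildL_snd : ∀ (ts : List PTree) (l : List ℕ), (buildL ts l).2 = l.drop (psizeL ts)
  | [], l => by rw [buildL, psizeL, List.drop_zero]
  | t :: ts, l => by
    rw [buildL, buildL_snd ts, build_snd t, List.drop_drop, psizeL, Nat.add_comm]
end

mutual
theorem shape_build : ∀ (t : PTree) (l : List ℕ), shape (build t l).1 = t
  | .node ts, l => by rw [build, shape, shapeL_buildL ts]
theorem shapeL_buildL : ∀ (ts : List PTree) (l : List ℕ), shapeL (buildL ts l).1 = ts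
  | [], l => by rw [buildL, shapeL]
  | t :: ts, l => by rw [buildL, shapeL, shape_build t, shapeL_buildL ts]
end

mutual
theorem labels_build : ∀ (t : PTree) (l : List ℕ), psize t ≤ l.length →
    ((build t l).1).labels = l.take (psize t)
  | .node ts, l => by
    intro h
    rw [psize] at h ⊢
    match l with
    | [] => simp at h
    | x :: l' =>
      rw [build, labels_node']
      have hL : labelsL (buildL ts (x :: l').tail).1 = (x :: l').tail.take (psizeL ts) := by
        apply labelsL_buildL
        simp only [List.tail_cons]
        simp only [List.length_cons] at h
        omega
      rw [hL]
      simp [Nat.add_comm 1 (psizeL ts)]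
theorem labelsL_buildL : ∀ (ts : List PTree) (l : List ℕ), psizeL ts ≤ l.length →
    labelsL (buildL ts l).1 = l.take (psizeL ts)
  | [], l => by intro _; rw [buildL, psizeL, labelsL]; simp
  | t :: ts, l => by
    intro h
    rw [psizeL] at h ⊢
    have h1 : psize t ≤ l.length := by omega
    rw [buildL, labelsL, List.map_cons, List.flatten_cons, ← labelsL,
      labels_build t l h1, build_snd, labelsL_buildL ts _ (by
        rw [List.length_drop]; omega),
      List.take_add]
theorem labelsL.aux : True := trivial
end

mutual
theorem build_shape : ∀ (t : LPlaneTree) (r : List ℕ),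
    build (shape t) (t.labels ++ r) = (t, r)
  | .node a ts, r => by
    rw [shape, labels_node', build]
    have h := buildL_shapeL ts r
    simp only [List.cons_append, List.headD_cons, List.tail_cons]
    rw [h]
theorem buildL_shapeL : ∀ (ts : List LPlaneTree) (r : List ℕ),
    buildL (shapeL ts) (labelsL ts ++ r) = (ts, r)
  | [], r => by rw [shapeL, labelsL]; simp [buildL]
  | t :: ts, r => by
    rw [shapeL, labelsL, List.map_cons, List.flatten_cons, ← labelsL, buildL]
    rw [List.append_assoc, build_shape t (labelsL ts ++ r)]
    simp only
    rw [buildL_shapeL ts r]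
end

mutual
theorem labelsL_cons (t : LPlaneTree) (ts : List LPlaneTree) :
    labelsL (t :: ts) = t.labels ++ labelsL ts := by
  rw [labelsL, List.map_cons, List.flatten_cons, labelsL]
end

mutual
theorem labels_length : ∀ t : LPlaneTree, t.labels.length = numVertices t
  | .node a ts => by
    rw [labels_node', numVertices_node, List.length_cons, labelsL_length ts, Nat.add_comm]
theorem labelsL_length : ∀ ts : List LPlaneTree, (labelsL ts).length = (ts.map numVertices).sum
  | [] => by rw [labelsL]; simp
  | t :: ts => by
    rw [labelsL_cons, List.length_append, labels_length t, labelsL_length ts,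
      List.map_cons, List.sum_cons]
end

theorem ncard_labelled (n : ℕ) (p : ℕ → Prop) [DecidablePred p] :
    {t : LPlaneTree | t.IsLabelled n ∧ p t.numLeaves}.ncard
      = ((S n).filter fun s => p (pleaves s)).card * (n + 1).factorial := by
  classical
  set Ln := (List.range' 1 (n + 1)).permutations.toFinset with hLn
  have hmemLn : ∀ l : List ℕ, l ∈ Ln ↔ l.Perm (List.range' 1 (n + 1)) := by
    intro l; rw [hLn, List.mem_toFinset, List.mem_permutations]
  have hlen : ∀ l : List ℕ, l ∈ Ln → l.length = n + 1 := by
    intro l hl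
    rw [((hmemLn l).mp hl).length_eq, List.length_range']
  have hbuild_labels : ∀ s ∈ S n, ∀ l ∈ Ln, ((build s l).1).labels = l := by
    intro s hs l hl
    rw [labels_build s l (by rw [mem_S.mp hs, hlen l hl]),
      mem_S.mp hs, ← hlen l hl, List.take_length]
  have hbuild_vert : ∀ s ∈ S n, ∀ l : List ℕ, numVertices (build s l).1 = n + 1 := by
    intro s hs l
    rw [← psize_shape, shape_build, mem_S.mp hs]
  have hbuild_leaves : ∀ (s : PTree) (l : List ℕ), numLeaves (build s l).1 = pleaves s := by
    intro s l
    rw [← pleaves_shape, shape_build]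
  have hset : {t : LPlaneTree | t.IsLabelled n ∧ p t.numLeaves}
      = ↑((((S n).filter fun s => p (pleaves s)) ×ˢ Ln).image fun q => (build q.1 q.2).1) := by
    ext t
    simp only [Set.mem_setOf_eq, Finset.coe_image, Set.mem_image, Finset.mem_coe,
      Finset.mem_product, Finset.mem_filter, Prod.exists]
    constructor
    · rintro ⟨⟨he, hp⟩, hP⟩
      have hv : numVertices t = n + 1 := by
        rw [← labels_length, hp.length_eq, List.length_range']
      refine ⟨shape t, t.labels, ⟨⟨?_, ?_⟩, ?_⟩, ?_⟩
      · rw [mem_S, psize_shape, hv]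
      · rw [pleaves_shape]; exact hP
      · rw [hmemLn]; exact hp
      · have := build_shape t []
        rw [List.append_nil] at this
        rw [this]
    · rintro ⟨s, l, ⟨⟨hs, hP⟩, hl⟩, rfl⟩
      have hlab := hbuild_labels s hs l hl
      refine ⟨⟨?_, ?_⟩, ?_⟩
      · rw [LPlaneTree.numEdges, hbuild_vert s hs l]
        omega
      · rw [hlab]
        exact (hmemLn l).mp hl
      · rw [hbuild_leaves]
        exact hP
  rw [hset, Set.ncard_coe_finset, Finset.card_image_of_injOn, Finset.card_product]
  · congr 1
    rw [hLn, List.toFinset_card_of_nodup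
      (List.nodup_permutations _ List.nodup_range'),
      List.length_permutations, List.length_range']
  · rintro ⟨s, l⟩ hq ⟨s', l'⟩ hq' he
    simp only [Finset.mem_coe, Finset.mem_product, Finset.mem_filter] at hq hq'
    have he' : (build s l).1 = (build s' l').1 := he
    have h1 : l = l' := by
      rw [← hbuild_labels s hq.1.1 l hq.2, ← hbuild_labels s' hq'.1.1 l' hq'.2, he']
    have h2 : s = s' := by
      rw [← shape_build s l, ← shape_build s' l', he']
    rw [Prod.mk.injEq]
    exact ⟨h2, h1⟩

theorem b_eq_card_sub_card (n : ℕ) :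
    b n = (((S n).filter fun s => Even (pleaves s)).card : ℤ)
        - (((S n).filter fun s => Odd (pleaves s)).card : ℤ) := by
  classical
  rw [b, ← Finset.sum_filter_add_sum_filter_not (S n) (fun s => Even (pleaves s))]
  have h1 : ∑ t ∈ (S n).filter (fun s => Even (pleaves s)), (-1 : ℤ) ^ pleaves t
      = ((S n).filter fun s => Even (pleaves s)).card := by
    rw [Finset.sum_congr rfl (fun t ht => (Finset.mem_filter.mp ht).2.neg_one_pow),
      Finset.sum_const, nsmul_eq_mul, mul_one]
  have h2 : ∑ t ∈ (S n).filter (fun s => ¬ Even (pleaves s)), (-1 : ℤ) ^ pleaves t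
      = -(((S n).filter fun s => Odd (pleaves s)).card : ℤ) := by
    have hfe : (S n).filter (fun s => ¬ Even (pleaves s))
        = (S n).filter (fun s => Odd (pleaves s)) := by
      apply Finset.filter_congr
      intro s _
      exact Nat.not_even_iff_odd
    rw [hfe, Finset.sum_congr rfl
      (fun t ht => (Finset.mem_filter.mp ht).2.neg_one_pow),
      Finset.sum_const, nsmul_eq_mul, mul_neg_one]
  rw [h1, h2]
  ring

theorem factorial_arith (n : ℕ) :
    (2 * n).factorial / n.factorial * ((2 * n + 2).factorial / (n + 1).factorial)
      = catalan n * (2 * n + 2).factorial := by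
  have hdvd : (n + 1).factorial ∣ (2 * n + 2).factorial :=
    Nat.factorial_dvd_factorial (by omega)
  have hcb : (2 * n).choose n * n.factorial * n.factorial = (2 * n).factorial := by
    have := Nat.choose_mul_factorial_mul_factorial (show n ≤ 2 * n by omega)
    rwa [show 2 * n - n = n by omega] at this
  have hcat : (n + 1) * catalan n = (2 * n).choose n := by
    rw [succ_mul_catalan_eq_centralBinom, Nat.centralBinom]
  have h2 : (2 * n).factorial = catalan n * (n + 1).factorial * n.factorial := by
    rw [← hcb, ← hcat, Nat.factorial_succ]
    ring
  have e1 : (2 * n).factorial / n.factorial = catalan n * (n + 1).factorial := by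
    rw [h2, Nat.mul_div_cancel _ (Nat.factorial_pos n)]
  have e2 : (n + 1).factorial * ((2 * n + 2).factorial / (n + 1).factorial)
      = (2 * n + 2).factorial := Nat.mul_div_cancel' hdvd
  rw [e1, mul_assoc, e2]

/-- For every integer `n ≥ 0`,
`Q_e(2n+1) - Q_o(2n+1) = (-1)^{n+1} · ((2n)!/n!) · ((2n+2)!/(n+1)!)` as integers. -/
theorem labelled_even_sub_odd_leaves_card_odd_edges (n : ℕ) :
    ({t : LPlaneTree | t.IsLabelled (2 * n + 1) ∧ Even t.numLeaves}.ncard : ℤ) -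
      ({t : LPlaneTree | t.IsLabelled (2 * n + 1) ∧ Odd t.numLeaves}.ncard : ℤ) =
      (-1) ^ (n + 1) * ((2 * n).factorial / n.factorial : ℕ) *
        ((2 * n + 2).factorial / (n + 1).factorial : ℕ) := by
  classical
  have hE := ncard_labelled (2 * n + 1) (fun m => Even m)
  have hO := ncard_labelled (2 * n + 1) (fun m => Odd m)
  have hb := (PTree.b_parity n).1
  have hbc := b_eq_card_sub_card (2 * n + 1)
  have hfact : (2 * n + 1 + 1).factorial = (2 * n + 2).factorial := by norm_num
  have hZ : (((2 * n).factorial / n.factorial : ℕ) : ℤ)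
        * (((2 * n + 2).factorial / (n + 1).factorial : ℕ) : ℤ)
      = (catalan n : ℤ) * ((2 * n + 2).factorial : ℤ) := by
    have := congrArg (fun k : ℕ => (k : ℤ)) (factorial_arith n)
    simpa only [Nat.cast_mul] using this
  have hcards : ((((PTree.S (2 * n + 1)).filter fun s => Even (PTree.pleaves s)).card : ℤ)
        - (((PTree.S (2 * n + 1)).filter fun s => Odd (PTree.pleaves s)).card : ℤ))
      = (-1) ^ (n + 1) * catalan n := by
    rw [← hbc, hb]
  rw [hE, hO, hfact, Nat.cast_mul, Nat.cast_mul]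
  linear_combination ((2 * n + 2).factorial : ℤ) * hcards - ((-1 : ℤ) ^ (n + 1)) * hZ
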